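/- Matrix Form of the 2D Multi-Filter Convolution (Lemma B.23): Let M, C, D be powers of two with D ≤ M. Let X be a rank-3 tensor with entries X_{i,k,j} for i ∈ [C], j,k ∈ [M], vectorized as |X⟩ := Σ_{i∈[C]} Σ_{j∈[M]} Σ_{k∈[M]} X_{i,k,j} |i⟩_C ⊗ |j⟩_M ⊗ |k⟩_M ∈ ℂ^{CM²}, and let X̃_{i,j,k} := X_{i,j,k} when j ≥ 0 and k ≥ 0 and X̃_{i,j,k} := 0 otherwise. Let K be a rank-4 kernel tensor with entries K_{i,j,k,l} for i,j ∈ [C], k,l ∈ [D], and define the multi-filter 2D convolution output [X ∗ K]_{x,y,z} := Σ_{j∈[C]} Σ_{k∈[D]} Σ_{l∈[D]} K_{x,j,k,l} X̃_{j, z−k, y−l}. Let Q := Σ_{j=0}^{M−2} |j+1⟩⟨j| be the M×M discrete unilateral shift matrix and define 𝒞 := Σ_{i∈[C]} Σ_{j∈[C]} Σ_{k∈[D]} Σ_{l∈[D]} K_{i,j,k,l} (|i⟩⟨j| ⊗ Q^l ⊗ Q^k), a CM² × CM² matrix. Then for all x ∈ [C] and y,z ∈ [M], (⟨x| ⊗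 ⟨y| ⊗ ⟨z|) 𝒞 |X⟩ = [X ∗ K]_{x,y,z}; i.e. 𝒞|X⟩ is the vectorization of X ∗ K. -/

import Mathlib

/-!
Both sides are linear in `K`, so it suffices to apply a single term `|i⟩⟨j| ⊗ Q^l ⊗ Q^k`.
The factor `|i⟩⟨j|` moves channel `j` of the input to output channel `i`, and since
`(Q^n v)_y = v_{y-n}` for `n ≤ y` and `0` otherwise, `Q^l ⊗ Q^k` shifts the two spatial indices
by `(l, k)` with zero padding, which is exactly `X̃_{j, z-k, y-l}`.
-/

open scoped Kronecker Matrix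

noncomputable section

/-- Reinterpret a plain function as an element of `EuclideanSpace`. -/
def toEuc {𝕜 : Type*} [RCLike 𝕜] {ι : Type*} (v : ι → 𝕜) : EuclideanSpace 𝕜 ι := WithLp.toLp 2 v

/-- The zero-padded extension `X̃` of the input tensor `X` to integer indices:
`X̃_{i,u,v} = X_{i,u,v}` for valid indices `u, v ≥ 0` and `0` otherwise. -/
def Xtil {C M : ℕ} (X : Fin C → Fin M → Fin M → ℂ) (i : Fin C) (u v : ℤ) : ℂ :=
  if h : 0 ≤ u ∧ 0 ≤ v ∧ u < (M : ℤ) ∧ v < (M : ℤ) then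
    X i ⟨u.toNat, by omega⟩ ⟨v.toNat, by omega⟩
  else 0

namespace Matrix

def shiftMatrix (R : Type*) [Zero R] [One R] (M : ℕ) : Matrix (Fin M) (Fin M) R :=
  of fun i j => if (i : ℕ) = j + 1 then 1 else 0

section Shift

variable {R : Type*} [Semiring R] {M : ℕ}

theorem shiftMatrix_pow_apply (n : ℕ) (i j : Fin M) :
    (shiftMatrix R M ^ n) i j = if (i : ℕ) = j + n then 1 else 0 := by
  induction n generalizing i with
  | zero => simp [one_apply, Fin.ext_iff]
  | succ n ih =>
    rw [pow_succ', mul_apply]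
    simp only [ih]
    simp only [shiftMatrix, of_apply, ite_mul, one_mul, zero_mul]
    by_cases hi : 0 < (i : ℕ)
    · rw [Finset.sum_eq_single ⟨i - 1, by omega⟩
        (fun t _ ht => if_neg fun h => ht (Fin.ext (by simp only; omega))) (by simp),
        if_pos (by simp only; omega)]
      exact if_congr (by simp only; omega) rfl rfl
    · simp [show ¬ (i : ℕ) = j + (n + 1) by omega, show ∀ t : Fin M, ¬ (i : ℕ) = t + 1 by omega]

theorem shiftMatrix_pow_mulVec_apply (n : ℕ) (v : Fin M → R) (i : Fin M) :
    (shiftMatrix R M ^ n *ᵥ v) i = if h : n ≤ i then v ⟨i - n, by omega⟩ else 0 := by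
  simp only [mulVec, dotProduct, shiftMatrix_pow_apply, ite_mul, one_mul, zero_mul]
  split_ifs with h
  · rw [Finset.sum_eq_single ⟨i - n, by omega⟩
        (fun t _ ht => if_neg fun h => ht (Fin.ext (by simp only; omega))) (by simp),
        if_pos (by simp only; omega)]
  · exact Finset.sum_eq_zero fun t _ => if_neg (by omega)

end Shift

section Kronecker

variable {R ι ι' κ κ' : Type*} [NonUnitalSemiring R] [Fintype ι'] [Fintype κ']

theorem kronecker_mulVec_apply (A : Matrix ι ι' R) (B : Matrix κ κ' R) (v : ι' × κ' → R)
    (x : ι) (p : κ) :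
    ((A ⊗ₖ B) *ᵥ v) (x, p) = (A *ᵥ fun a => (B *ᵥ fun q => v (a, q)) p) x := by
  simp only [mulVec, dotProduct, kroneckerMap_apply, Fintype.sum_prod_type, Finset.mul_sum,
    mul_assoc]

theorem single_kronecker_mulVec_apply [DecidableEq ι] [DecidableEq ι'] (i : ι) (j : ι') (c : R)
    (B : Matrix κ κ' R) (v : ι' × κ' → R) (x : ι) (p : κ) :
    ((single i j c ⊗ₖ B) *ᵥ v) (x, p) = if x = i then c * (B *ᵥ fun q => v (j, q)) p else 0 := by
  rw [kronecker_mulVec_apply, single_mulVec, Function.update_apply, Pi.zero_apply]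

end Kronecker

end Matrix

open Matrix

theorem shiftMatrix_pow_kronecker_mulVec_apply {C M : ℕ} (X : Fin C → Fin M → Fin M → ℂ)
    (j : Fin C) (k l : ℕ) (y z : Fin M) :
    (((shiftMatrix ℂ M ^ l) ⊗ₖ (shiftMatrix ℂ M ^ k)) *ᵥ fun p => X j p.2 p.1) (y, z)
      = Xtil X j (z - k) (y - l) := by
  simp only [kronecker_mulVec_apply, shiftMatrix_pow_mulVec_apply, Xtil]
  split_ifs <;> try first | rfl | omega
  congr 1 <;> ext <;> simp only <;> omega

theorem matrix_form_of_2d_convolution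
    (mm cc dd : ℕ)
    (X : Fin (2^cc) → Fin (2^mm) → Fin (2^mm) → ℂ)
    (K : Fin (2^cc) → Fin (2^cc) → Fin (2^dd) → Fin (2^dd) → ℂ)
    (Q : Matrix (Fin (2^mm)) (Fin (2^mm)) ℂ)
    (hQ : Q = Matrix.of fun i j : Fin (2^mm) => if (i : ℕ) = (j : ℕ) + 1 then 1 else 0)
    (Cmat : Matrix (Fin (2^cc) × (Fin (2^mm) × Fin (2^mm)))
        (Fin (2^cc) × (Fin (2^mm) × Fin (2^mm))) ℂ)
    (hC : Cmat = ∑ i : Fin (2^cc), ∑ j : Fin (2^cc), ∑ k : Fin (2^dd), ∑ l : Fin (2^dd),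
        K i j k l • (Matrix.single i j (1 : ℂ) ⊗ₖ ((Q ^ (l : ℕ)) ⊗ₖ (Q ^ (k : ℕ)))))
    (vecX : EuclideanSpace ℂ (Fin (2^cc) × (Fin (2^mm) × Fin (2^mm))))
    (hvecX : vecX = toEuc fun p => X p.1 p.2.2 p.2.1) :
    ∀ (x : Fin (2^cc)) (y z : Fin (2^mm)),
      Cmat.mulVec vecX (x, (y, z))
        = ∑ j : Fin (2^cc), ∑ k : Fin (2^dd), ∑ l : Fin (2^dd),
            K x j k l * Xtil X j (((z : ℕ) : ℤ) - ((k : ℕ) : ℤ))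
              (((y : ℕ) : ℤ) - ((l : ℕ) : ℤ)) := by
  obtain rfl : Q = shiftMatrix ℂ _ := hQ
  subst hC hvecX
  intro x y z
  simp only [sum_mulVec, smul_mulVec, Finset.sum_apply, Pi.smul_apply, smul_eq_mul,
    single_kronecker_mulVec_apply, one_mul, mul_ite, mul_zero, Finset.sum_ite_irrel,
    Finset.sum_const_zero, Finset.sum_ite_eq, Finset.mem_univ, if_true]
  exact Fintype.sum_congr _ _ fun j => Fintype.sum_congr _ _ fun k =>
    Fintype.sum_congr _ _ fun l => congrArg _ (shiftMatrix_pow_kronecker_mulVec_apply X j k l y z)
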